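/- For every integer l ≥ 0, the weighted inner product satisfies ⟨φ_{l+4}, φ_l⟩_ω = ⟨φ_l, φ_{l+4}⟩_ω = π(l+1) / (2(l+3)). -/
import Mathlib


open MeasureTheory

/-- The Chebyshev weight `ω(ξ) = (1 - ξ²)^(-1/2)`. -/
noncomputable def chebW (ξ : ℝ) : ℝ := (1 - ξ ^ 2) ^ (-(1 : ℝ) / 2)

/-- The degree-`k` Chebyshev polynomial of the first kind, as a function `ℝ → ℝ`. -/
noncomputable def chebT (k : ℕ) (ξ : ℝ) : ℝ := (Polynomial.Chebyshev.T ℝ k).eval ξ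

/-- The weighted inner product `⟨f, g⟩_ω = ∫_{-1}^{1} f(ξ) g(ξ) ω(ξ) dξ`. -/
noncomputable def ipw (f g : ℝ → ℝ) : ℝ := ∫ ξ in (-1 : ℝ)..1, f ξ * g ξ * chebW ξ

/-- The basis functions
`φ_k(ξ) = T_k(ξ) - (2(k+2)/(k+3)) T_{k+2}(ξ) + ((k+1)/(k+3)) T_{k+4}(ξ)`. -/
noncomputable def phiFun (k : ℕ) (ξ : ℝ) : ℝ :=
  chebT k ξ - (2 * ((k : ℝ) + 2) / ((k : ℝ) + 3)) * chebT (k + 2) ξ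
    + (((k : ℝ) + 1) / ((k : ℝ) + 3)) * chebT (k + 4) ξ


open Real in
lemma cheb_cos_image_Ioo : Real.cos '' Set.Ioo 0 π = Set.Ioo (-1 : ℝ) 1 := by
  ext y
  constructor
  · rintro ⟨θ, ⟨h0, hπ⟩, rfl⟩
    refine ⟨?_, ?_⟩
    · have := Real.strictAntiOn_cos ⟨h0.le, hπ.le⟩ ⟨Real.pi_pos.le, le_refl _⟩ hπ
      simpa using this
    · have := Real.strictAntiOn_cos ⟨le_refl _, Real.pi_pos.le⟩ ⟨h0.le, hπ.le⟩ h0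
      simpa using this
  · rintro ⟨h1, h2⟩
    refine ⟨Real.arccos y, ⟨Real.arccos_pos.2 h2, ?_⟩, Real.cos_arccos h1.le h2.le⟩
    rw [Real.arccos]
    have := Real.neg_pi_div_two_lt_arcsin.2 h1
    linarith

open Real in
lemma cheb_subst_cos (f : ℝ → ℝ) :
    (∫ ξ in (-1 : ℝ)..1, f ξ * chebW ξ) = ∫ θ in (0:ℝ)..π, f (Real.cos θ) := by
  rw [intervalIntegral.integral_of_le (by norm_num : (-1:ℝ) ≤ 1),
    intervalIntegral.integral_of_le Real.pi_pos.le,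
    MeasureTheory.integral_Ioc_eq_integral_Ioo,
    MeasureTheory.integral_Ioc_eq_integral_Ioo, ← cheb_cos_image_Ioo,
    integral_image_eq_integral_abs_deriv_smul measurableSet_Ioo
      (fun θ _ => (Real.hasDerivAt_cos θ).hasDerivWithinAt)
      (Real.injOn_cos.mono (Set.Ioo_subset_Icc_self))]
  refine setIntegral_congr_fun measurableSet_Ioo (fun θ hθ => ?_)
  have hs : 0 < Real.sin θ := Real.sin_pos_of_pos_of_lt_pi hθ.1 hθ.2
  have hW : chebW (Real.cos θ) = (Real.sin θ)⁻¹ := by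
    rw [chebW, show 1 - Real.cos θ ^ 2 = Real.sin θ ^ 2 from by rw [Real.sin_sq],
      show Real.sin θ ^ 2 = Real.sin θ ^ ((2:ℕ):ℝ) from (Real.rpow_natCast _ 2).symm,
      ← Real.rpow_mul hs.le]
    norm_num [Real.rpow_neg_one]
  rw [smul_eq_mul, hW, abs_neg, abs_of_pos hs]
  field_simp

open Real in
lemma cheb_integral_cos_c (c : ℝ) : (∫ θ in (0:ℝ)..π, Real.cos (c * θ)) =
    if c = 0 then π else Real.sin (c * π) / c := by
  rcases eq_or_ne c 0 with h | h
  · simp [h]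
  · rw [if_neg h, intervalIntegral.integral_comp_mul_left Real.cos h]
    simp [integral_cos, div_eq_inv_mul]

open Real in
noncomputable def ccI (a b : ℕ) : ℝ := ∫ θ in (0:ℝ)..π, Real.cos (a * θ) * Real.cos (b * θ)

open Real in
lemma ccI_eq (a b : ℕ) : ccI a b = if a = b then (if a = 0 then π else π / 2) else 0 := by
  have key : ∀ θ : ℝ, Real.cos (a * θ) * Real.cos (b * θ) =
      (Real.cos (((a:ℝ) + b) * θ) + Real.cos (((a:ℝ) - b) * θ)) / 2 := by
    intro θ
    rw [show ((a:ℝ) + b) * θ = a * θ + b * θ by ring,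
      show ((a:ℝ) - b) * θ = a * θ - b * θ by ring, Real.cos_add, Real.cos_sub]
    ring
  rw [ccI, intervalIntegral.integral_congr (fun θ _ => key θ),
    intervalIntegral.integral_div,
    intervalIntegral.integral_add
      ((by fun_prop : Continuous fun θ : ℝ => Real.cos (((a:ℝ) + b) * θ)).intervalIntegrable _ _)
      ((by fun_prop : Continuous fun θ : ℝ => Real.cos (((a:ℝ) - b) * θ)).intervalIntegrable _ _),
    cheb_integral_cos_c, cheb_integral_cos_c]
  rcases eq_or_ne a b with rfl | hab
  · rcases eq_or_ne a 0 with rfl | ha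
    · norm_num
    · have h1 : ((a:ℝ) + a) ≠ 0 := by positivity
      rw [if_neg h1, if_pos (by ring), if_pos rfl, if_neg ha]
      rw [show ((a:ℝ) + a) * π = ((a + a : ℕ) : ℝ) * π by push_cast; ring,
        Real.sin_nat_mul_pi]
      ring
  · have h2 : ((a:ℝ) - b) ≠ 0 := sub_ne_zero.2 (by exact_mod_cast hab)
    rw [if_neg hab, if_neg h2]
    rw [show ((a:ℝ) - b) * π = (((a:ℤ) - b : ℤ) : ℝ) * π by push_cast; ring,
      Real.sin_int_mul_pi]
    rcases eq_or_ne ((a:ℝ) + b) 0 with h1 | h1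
    · exfalso
      have : (a + b : ℕ) = 0 := by exact_mod_cast h1
      omega
    · rw [if_neg h1, show ((a:ℝ) + b) * π = ((a + b : ℕ) : ℝ) * π by push_cast; ring,
        Real.sin_nat_mul_pi]
      norm_num

lemma ccI_ne {a b : ℕ} (h : a ≠ b) : ccI a b = 0 := by rw [ccI_eq, if_neg h]

open Real in
lemma ccI_self {a : ℕ} (h : a ≠ 0) : ccI a a = π / 2 := by
  rw [ccI_eq, if_pos rfl, if_neg h]

open Real in
lemma cheb_int_last (c : ℝ) (u v : ℕ) :
    (∫ θ in (0:ℝ)..π, c * (Real.cos (u * θ) * Real.cos (v * θ))) = c * ccI u v := by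
  rw [intervalIntegral.integral_const_mul]; rfl

open Real in
lemma cheb_expand (l : ℕ) (c2 c3 d2 d3 : ℝ) :
    (∫ θ in (0:ℝ)..π, ((1:ℝ) * (Real.cos ((l+4 : ℕ) * θ) * Real.cos ((l : ℕ) * θ)) + (d2 * (Real.cos ((l+4 : ℕ) * θ) * Real.cos ((l+2 : ℕ) * θ)) + (d3 * (Real.cos ((l+4 : ℕ) * θ) * Real.cos ((l+4 : ℕ) * θ)) + (c2 * (Real.cos ((l+6 : ℕ) * θ) * Real.cos ((l : ℕ) * θ)) + (c2*d2 * (Real.cos ((l+6 : ℕ) * θ) * Real.cos ((l+2 : ℕ) * θ)) + (c2*d3 * (Real.cos ((l+6 : ℕ) * θ) * Real.cos ((l+4 : ℕ) * θ)) + (c3 * (Real.cos ((l+8 : ℕ) * θ) * Real.cos ((l : ℕ) * θ)) + (c3*d2 * (Real.cos ((l+8 : ℕ) * θ) * Real.cos ((l+2 : ℕ) * θ)) + c3*d3 * (Real.cos ((l+8 : ℕ) * θ) * Real.cos ((l+4 : ℕ) * θ))))))))))) = ((1:ℝ) * ccI (l+4) (l) + (d2 * ccI (l+4) (l+2) + (d3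 * ccI (l+4) (l+4) + (c2 * ccI (l+6) (l) + (c2*d2 * ccI (l+6) (l+2) + (c2*d3 * ccI (l+6) (l+4) + (c3 * ccI (l+8) (l) + (c3*d2 * ccI (l+8) (l+2) + c3*d3 * ccI (l+8) (l+4))))))))) := by
  have I : ∀ (c : ℝ) (u v : ℕ), IntervalIntegrable
      (fun θ : ℝ => c * (Real.cos (u * θ) * Real.cos (v * θ))) MeasureTheory.volume 0 π :=
    fun c u v => (by fun_prop : Continuous _).intervalIntegrable _ _
  rw [intervalIntegral.integral_add (I _ _ _) ((I _ _ _).add ((I _ _ _).add ((I _ _ _).add ((I _ _ _).add ((I _ _ _).add ((I _ _ _).add ((I _ _ _).add (I _ _ _)))))))),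
      intervalIntegral.integral_add (I _ _ _) ((I _ _ _).add ((I _ _ _).add ((I _ _ _).add ((I _ _ _).add ((I _ _ _).add ((I _ _ _).add (I _ _ _))))))),
      intervalIntegral.integral_add (I _ _ _) ((I _ _ _).add ((I _ _ _).add ((I _ _ _).add ((I _ _ _).add ((I _ _ _).add (I _ _ _)))))),
      intervalIntegral.integral_add (I _ _ _) ((I _ _ _).add ((I _ _ _).add ((I _ _ _).add ((I _ _ _).add (I _ _ _))))),
      intervalIntegral.integral_add (I _ _ _) ((I _ _ _).add ((I _ _ _).add ((I _ _ _).add (I _ _ _)))),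
      intervalIntegral.integral_add (I _ _ _) ((I _ _ _).add ((I _ _ _).add (I _ _ _))),
      intervalIntegral.integral_add (I _ _ _) ((I _ _ _).add (I _ _ _)),
      intervalIntegral.integral_add (I _ _ _) (I _ _ _)]
  simp only [cheb_int_last]

open Real in
lemma cheb_main (l : ℕ) :
    ipw (phiFun (l + 4)) (phiFun l) = Real.pi * ((l : ℝ) + 1) / (2 * ((l : ℝ) + 3)) := by
  rw [ipw, cheb_subst_cos (fun ξ => phiFun (l + 4) ξ * phiFun l ξ)]
  have congr1 : (∫ θ in (0:ℝ)..π, phiFun (l + 4) (Real.cos θ) * phiFun l (Real.cos θ)) =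
      ∫ θ in (0:ℝ)..π, ((1:ℝ) * (Real.cos ((l+4 : ℕ) * θ) * Real.cos ((l : ℕ) * θ)) + ((-(2 * ((l:ℝ) + 2) / ((l:ℝ) + 3))) * (Real.cos ((l+4 : ℕ) * θ) * Real.cos ((l+2 : ℕ) * θ)) + ((((l:ℝ) + 1) / ((l:ℝ) + 3)) * (Real.cos ((l+4 : ℕ) * θ) * Real.cos ((l+4 : ℕ) * θ)) + ((-(2 * ((l:ℝ) + 6) / ((l:ℝ) + 7))) * (Real.cos ((l+6 : ℕ) * θ) * Real.cos ((l : ℕ) * θ)) + ((-(2 * ((l:ℝ) + 6) / ((l:ℝ) + 7)))*(-(2 * ((l:ℝ) + 2) / ((l:ℝ) + 3))) * (Real.cos ((l+6 : ℕ) * θ) * Real.cos ((l+2 : ℕ) * θ)) + ((-(2 * ((l:ℝ) + 6) / ((l:ℝ) + 7)))*(((l:ℝ) + 1) / ((l:ℝ) + 3)) * (Real.cos ((l+6 : ℕ) * θ) * Real.cos ((l+4 : ℕ) * θ)) + ((((l:ℝ) + 5) / ((l:ℝ) + 7)) * (Real.cos ((l+8 : ℕ) * θ) * Real.cos ((l :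 ℕ) * θ)) + ((((l:ℝ) + 5) / ((l:ℝ) + 7))*(-(2 * ((l:ℝ) + 2) / ((l:ℝ) + 3))) * (Real.cos ((l+8 : ℕ) * θ) * Real.cos ((l+2 : ℕ) * θ)) + (((l:ℝ) + 5) / ((l:ℝ) + 7))*(((l:ℝ) + 1) / ((l:ℝ) + 3)) * (Real.cos ((l+8 : ℕ) * θ) * Real.cos ((l+4 : ℕ) * θ)))))))))) := by
    refine intervalIntegral.integral_congr (fun θ _ => ?_)
    simp only [phiFun, chebT, Polynomial.Chebyshev.T_real_cos]
    push_cast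
    ring
  rw [congr1, cheb_expand l, ccI_ne (by omega), ccI_ne (by omega), ccI_self (by omega),
    ccI_ne (by omega), ccI_ne (by omega), ccI_ne (by omega), ccI_ne (by omega),
    ccI_ne (by omega), ccI_ne (by omega)]
  have h3 : ((l:ℝ) + 3) ≠ 0 := by positivity
  field_simp
  ring_nf

/-- For every `l ≥ 0`, `⟨φ_{l+4}, φ_l⟩_ω = ⟨φ_l, φ_{l+4}⟩_ω = π(l+1) / (2(l+3))`. -/
theorem ipw_phiFun_fourth_diagonal (l : ℕ) :
    ipw (phiFun (l + 4)) (phiFun l) = Real.pi * ((l : ℝ) + 1) / (2 * ((l : ℝ) + 3)) ∧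
    ipw (phiFun l) (phiFun (l + 4)) = Real.pi * ((l : ℝ) + 1) / (2 * ((l : ℝ) + 3)) := by
  have hsymm : ipw (phiFun l) (phiFun (l + 4)) = ipw (phiFun (l + 4)) (phiFun l) := by
    unfold ipw
    exact intervalIntegral.integral_congr (fun ξ _ => by ring)
  exact ⟨cheb_main l, hsymm.trans (cheb_main l)⟩
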